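/- Let a : ℝ → ℝ be analytic and non-polynomial, let x₁, ..., xₘ be reals with 0 < |x₁| < ... < |xₘ|, and let λ₁, ..., λₘ be rationals, not all zero. Then the function g(γ) = λ₁ a(γx₁) + ... + λₘ a(γxₘ) has only finitely many roots in [0,1]. -/

import Mathlib

/-!
If `g` had infinitely many zeros in the compact interval `[0, 1]`, they would accumulate, so the
analytic function `g` would vanish identically. Differentiating `n` times at `0` then gives
`(∑ i, λ i * x i ^ n) * a⁽ⁿ⁾(0) = 0`. The power sum is eventually nonzero, since after
division by `x j ^ n` for the largest `|x j|` with `λ j ≠ 0` it tends to `λ j`. Hence all but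
finitely many Taylor coefficients of `a` at `0` vanish, and by the identity theorem `a` is a
polynomial.
-/

open Filter Topology Polynomial Set
open scoped Nat

theorem AnalyticOnNhd.eqOn_zero_of_infinite_zeros {𝕜 E : Type*} [NontriviallyNormedField 𝕜]
    [NormedAddCommGroup E] [NormedSpace 𝕜 E] {f : 𝕜 → E} {U K : Set 𝕜}
    (hf : AnalyticOnNhd 𝕜 f U) (hU : IsPreconnected U) (hK : IsCompact K) (hKU : K ⊆ U)
    (hzeros : {z ∈ K | f z = 0}.Infinite) : EqOn f 0 U := by
  refine (hf.eqOn_zero_or_eventually_ne_zero_of_preconnected hU).resolve_right fun hne ↦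
    hzeros ?_
  exact (hK.finite_sdiff_of_mem_codiscreteWithin (codiscreteWithin_mono hKU hne)).subset
    fun z ⟨hzK, hz⟩ ↦ ⟨hzK, not_not.2 hz⟩

section PowerSums

variable {𝕜 ι : Type*} [NormedField 𝕜] [Fintype ι] {c x : ι → 𝕜}

theorem tendsto_sum_mul_div_pow {j : ι} (hxj : x j ≠ 0)
    (hj : ∀ i ≠ j, c i ≠ 0 → ‖x i‖ < ‖x j‖) :
    Tendsto (fun n ↦ ∑ i, c i * (x i / x j) ^ n) atTop (𝓝 (c j)) := by
  classical
  rw [← Fintype.sum_ite_eq' j c]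
  refine tendsto_finsetSum _ fun i _ ↦ ?_
  split_ifs with hij
  · subst hij
    simp [div_self hxj]
  · by_cases hci : c i = 0
    · simp [hci]
    have hlt : ‖x i / x j‖ < 1 := by
      rw [norm_div, div_lt_one (norm_pos_iff.2 hxj)]
      exact hj i hij hci
    simpa using (tendsto_pow_atTop_nhds_zero_of_norm_lt_one hlt).const_mul (c i)

theorem eventually_sum_mul_pow_ne_zero (hc : c ≠ 0) (hx : ∀ i, x i ≠ 0)
    (hinj : Function.Injective fun i ↦ ‖x i‖) :
    ∀ᶠ n in atTop, ∑ i, c i * x i ^ n ≠ 0 := by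
  classical
  obtain ⟨i₀, hi₀⟩ := Function.ne_iff.1 hc
  obtain ⟨j, hjc, hjmax⟩ := (Finset.univ.filter (c · ≠ 0)).exists_max_image (‖x ·‖)
    ⟨i₀, by simpa using hi₀⟩
  have hdom : ∀ i ≠ j, c i ≠ 0 → ‖x i‖ < ‖x j‖ := fun i hij hci ↦
    (hjmax i (by simpa using hci)).lt_of_ne (hinj.ne hij)
  filter_upwards [(tendsto_sum_mul_div_pow (hx j) hdom).eventually_ne (by simpa using hjc)]
    with n hn hzero
  refine hn ?_
  simp only [div_pow, ← mul_div_assoc, ← Finset.sum_div, hzero, zero_div]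

end PowerSums

theorem iteratedDeriv_sum_mul_comp_mul {𝕜 ι : Type*} [NontriviallyNormedField 𝕜] [Fintype ι]
    {f : 𝕜 → 𝕜} {n : ℕ} (hf : ContDiff 𝕜 n f) (c x : ι → 𝕜) (t : 𝕜) :
    iteratedDeriv n (fun γ ↦ ∑ i, c i * f (γ * x i)) t =
      ∑ i, c i * x i ^ n * iteratedDeriv n f (t * x i) := by
  have hcomp : ∀ i, ContDiff 𝕜 n fun γ ↦ f (x i * γ) := fun i ↦
    hf.comp (contDiff_const.mul contDiff_id)
  simp_rw [mul_comm _ (x _)]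
  rw [iteratedDeriv_fun_sum fun i _ ↦ (contDiff_const.mul (hcomp i)).contDiffAt]
  refine Finset.sum_congr rfl fun i _ ↦ ?_
  rw [iteratedDeriv_const_mul _ (hcomp i).contDiffAt, iteratedDeriv_comp_const_mul hf, mul_assoc]

theorem exists_polynomial_eq_of_iteratedDeriv_eq_zero {𝕜 : Type*} [NontriviallyNormedField 𝕜]
    [CharZero 𝕜] [CompleteSpace 𝕜] [PreconnectedSpace 𝕜] {f : 𝕜 → 𝕜}
    (hf : ∀ z, AnalyticAt 𝕜 f z) {N : ℕ} (hN : ∀ n ≥ N, iteratedDeriv n f 0 = 0) :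
    ∃ p : 𝕜[X], ∀ z, f z = p.eval z := by
  set p : 𝕜[X] := ∑ i ∈ Finset.range N, C (iteratedDeriv i f 0 / i !) * X ^ i
  have hp : ∀ n, iteratedDeriv n (fun z ↦ p.eval z) 0 =
      if n < N then iteratedDeriv n f 0 else 0 := by
    intro n
    simp (disch := fun_prop) only [p, eval_finsetSum, eval_mul, eval_C, eval_pow, eval_X,
      iteratedDeriv_fun_sum, iteratedDeriv_const_mul, iteratedDeriv_fun_pow_zero]
    simp [Finset.sum_ite_eq, Nat.factorial_ne_zero]
  have hpa : ∀ z, AnalyticAt 𝕜 (fun z ↦ p.eval z) z := fun z ↦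
    AnalyticOnNhd.eval_polynomial p z trivial
  have hfp : ∀ z, AnalyticAt 𝕜 (fun z ↦ f z - p.eval z) z := fun z ↦ (hf z).sub (hpa z)
  have hderiv : ∀ i, iteratedDeriv i (fun z ↦ f z - p.eval z) 0 = 0 := by
    intro i
    rw [iteratedDeriv_fun_sub (hf 0).contDiffAt (hpa 0).contDiffAt, hp]
    split_ifs with hi
    · exact sub_self _
    · rw [hN i (not_lt.1 hi), sub_zero]
  have hzero : (fun z ↦ f z - p.eval z) = 0 := by
    refine (AnalyticOnNhd.analyticOrderAt_eq_top_iff_eq_zero 0 hfp).1 <|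
      ENat.eq_top_iff_forall_ge.2 fun n ↦ ?_
    exact (natCast_le_analyticOrderAt_iff_iteratedDeriv_eq_zero (hfp 0)).2 fun i _ ↦ hderiv i
  exact ⟨p, fun z ↦ sub_eq_zero.1 (congrFun hzero z)⟩

theorem stmt_8 (a : ℝ → ℝ) (ha : ∀ x : ℝ, AnalyticAt ℝ a x)
    (hnp : ¬ ∃ p : Polynomial ℝ, ∀ x : ℝ, a x = p.eval x)
    (m : ℕ) (hm : 0 < m) (x : Fin m → ℝ)
    (h0 : 0 < |x ⟨0, hm⟩|) (hmono : StrictMono fun i => |x i|)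
    (l : Fin m → ℚ) (hl : l ≠ 0) :
    {γ ∈ Set.Icc (0:ℝ) 1 | ∑ i, (l i : ℝ) * a (γ * x i) = 0}.Finite := by
  by_contra hinf
  have hg : ∀ γ, ∑ i, (l i : ℝ) * a (γ * x i) = 0 := fun γ ↦
    AnalyticOnNhd.eqOn_zero_of_infinite_zeros (fun γ _ ↦ by fun_prop) isPreconnected_univ
      isCompact_Icc (subset_univ _) hinf (mem_univ γ)
  have hl' : (fun i ↦ (l i : ℝ)) ≠ 0 := fun h ↦
    hl (funext fun i ↦ Rat.cast_eq_zero.1 (congrFun h i))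
  have hx : ∀ i, x i ≠ 0 := fun i ↦
    abs_pos.1 (h0.trans_le (hmono.monotone (show (⟨0, hm⟩ : Fin m) ≤ i from Nat.zero_le _)))
  have hinj : Function.Injective fun i ↦ ‖x i‖ := by
    simpa only [Real.norm_eq_abs] using hmono.injective
  obtain ⟨N, hN⟩ := eventually_atTop.1 (eventually_sum_mul_pow_ne_zero hl' hx hinj)
  refine hnp (exists_polynomial_eq_of_iteratedDeriv_eq_zero ha (N := N) fun n hn ↦ ?_)
  have hder := iteratedDeriv_sum_mul_comp_mul (AnalyticOnNhd.contDiff (n := n) fun y _ ↦ ha y)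
    (fun i ↦ (l i : ℝ)) x 0
  simp only [hg, iteratedDeriv_fun_const_zero, zero_mul, ← Finset.sum_mul] at hder
  exact (mul_eq_zero.1 hder.symm).resolve_left (hN n hn)
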